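/- arXiv:2111.02547 — 3 statements merged into one kernel-verified Lean document; each statement's English description precedes it below -/
import Mathlib

section
/- Let f, g ∈ Cu(G) and let A = (A_n) be a van Hove sequence. If the Eberlein convolution f ⊛_A g̃ exists, then the Eberlein convolution g ⊛_A f̃ exists and g ⊛_A f̃ = (f ⊛_A g̃)~, i.e. (g ⊛_A f̃)(t) = conj((f ⊛_A g̃)(−t)) for all t ∈ G. -/
open MeasureTheory Filter Topology Pointwise ComplexConjugate
open scoped BigOperators

noncomputable section

variable {G : Type*} [AddCommGroup G] [UniformSpace G] [IsUniformAddGroup G]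
  [LocallyCompactSpace G] [SecondCountableTopology G]
  [MeasurableSpace G] [BorelSpace G]

/-- The van Hove `K`-boundary of a set `B`:
`∂^K B = (closure (B+K) \ B) ∪ (((G \ B) - K) ∩ closure B)`. -/
def vhBoundary (K B : Set G) : Set G :=
  (closure (B + K) \ B) ∪ ((Bᶜ - K) ∩ closure B)

/-- `A` is a van Hove sequence for the Haar measure `μ`: a sequence of compact sets of
positive measure such that for every compact `K` the relative measure of the van Hove
boundary tends to `0`. -/
def IsVanHove (μ : Measure G) (A : ℕ → Set G) : Prop :=
  (∀ n, IsCompact (A n)) ∧ (∀ n, 0 < μ (A n)) ∧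
    ∀ K : Set G, IsCompact K →
      Tendsto (fun n => μ (vhBoundary K (A n)) / μ (A n)) atTop (nhds 0)

/-- `f ∈ Cu(G)`: bounded and uniformly continuous. -/
def IsCu (f : G → ℂ) : Prop :=
  UniformContinuous f ∧ ∃ C : ℝ, ∀ x, ‖f x‖ ≤ C

/-- `χ` is a (continuous, unimodular) character of `G`, viewed as a `ℂ`-valued function. -/
def IsChar (χ : G → ℂ) : Prop :=
  Continuous χ ∧ (∀ x, ‖χ x‖ = 1) ∧ ∀ x y, χ (x + y) = χ x * χ y

/-- `f̃(x) = conj (f (-x))`. -/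
def tilde (f : G → ℂ) : G → ℂ := fun x => conj (f (-x))

/-- `(T_t f)(x) = f (x - t)`. -/
def shiftBy (t : G) (f : G → ℂ) : G → ℂ := fun x => f (x - t)

/-- Sup norm `‖f‖_∞`. -/
def supN (f : G → ℂ) : ℝ := ⨆ x, ‖f x‖

/-- The Fourier–Bohr coefficient `c_χ^A(f)` exists and equals `c`. -/
def FBTendsto (μ : Measure G) (A : ℕ → Set G) (χ f : G → ℂ) (c : ℂ) : Prop :=
  Tendsto (fun n => (μ (A n)).toReal⁻¹ • ∫ t in A n, conj (χ t) * f t ∂μ)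
    atTop (nhds c)

/-- The Fourier–Bohr coefficient of `f` at `χ` exists uniformly (w.r.t. `A`) with value `c`:
`lim_n |A_n|⁻¹ ∫_{x+A_n} conj (χ t) f t dθ(t) = c` uniformly in `x ∈ G`. -/
def FBUniform (μ : Measure G) (A : ℕ → Set G) (χ f : G → ℂ) (c : ℂ) : Prop :=
  TendstoUniformly
    (fun n (x : G) => (μ (A n)).toReal⁻¹ • ∫ t in x +ᵥ A n, conj (χ t) * f t ∂μ)
    (fun _ => c) atTop

/-- The Eberlein convolution `f ⊛_A g` exists and equals `F`:
for every `t`, `lim_n |A_n|⁻¹ ∫_{A_n} f s · g (t - s) dθ(s) = F t`. -/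
def EberleinTendsto (μ : Measure G) (A : ℕ → Set G) (f g F : G → ℂ) : Prop :=
  ∀ t : G, Tendsto (fun n => (μ (A n)).toReal⁻¹ • ∫ s in A n, f s * g (t - s) ∂μ)
    atTop (nhds (F t))

/-- The Besicovitch seminorm `‖f‖_{b,p,A}`. -/
def bNorm (μ : Measure G) (A : ℕ → Set G) (p : ℝ) (f : G → ℂ) : ℝ :=
  Filter.limsup
    (fun n => ((μ (A n)).toReal⁻¹ * ∫ t in A n, ‖f t‖ ^ p ∂μ) ^ (1 / p)) atTop

/-- `P` is a trigonometric polynomial: a finite linear combination of characters. -/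
def IsTrigPoly (P : G → ℂ) : Prop :=
  ∃ (k : ℕ) (c : Fin k → ℂ) (χ : Fin k → G → ℂ),
    (∀ j, IsChar (χ j)) ∧ P = fun x => ∑ j, c j * χ j x

/-- `f ∈ Bap^p_A(G)`: `f` can be approximated by trigonometric polynomials in `‖·‖_{b,p,A}`. -/
def BapP (μ : Measure G) (A : ℕ → Set G) (p : ℝ) (f : G → ℂ) : Prop :=
  ∀ ε : ℝ, 0 < ε → ∃ P : G → ℂ, IsTrigPoly P ∧ bNorm μ A p (fun x => f x - P x) < ε

/-- `f` is amenable w.r.t. `A` with mean `c`: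
`lim_n |A_n|⁻¹ ∫_{x+A_n} f dθ = c` uniformly in `x ∈ G`. -/
def Amenable (μ : Measure G) (A : ℕ → Set G) (f : G → ℂ) (c : ℂ) : Prop :=
  TendstoUniformly
    (fun n (x : G) => (μ (A n)).toReal⁻¹ • ∫ t in x +ᵥ A n, f t ∂μ)
    (fun _ => c) atTop

/-!
Conjugating the average that defines `(f ⊛ g̃)(-t)` and substituting `u = t + s` turns it into
the average of `g u * f̃ (t - u)` over `t + A_n` instead of `A_n`. The two regions differ only
inside the van Hove boundary `∂^{t, -t} A_n`, so for the bounded integrand the two averages have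
the same limit.
-/

section SetIntegralDifference

variable {X E : Type*} [MeasurableSpace X] [NormedAddCommGroup E] [NormedSpace ℝ E]

lemma norm_integral_sub_integral_le_of_le {ν ν' : Measure X} [IsFiniteMeasure ν'] (hle : ν ≤ ν')
    {φ : X → E} (hφ : StronglyMeasurable φ) {C : ℝ} (hC : ∀ x, ‖φ x‖ ≤ C) :
    ‖∫ x, φ x ∂ν' - ∫ x, φ x ∂ν‖ ≤ C * (ν' - ν).real Set.univ := by
  have : IsFiniteMeasure ν := isFiniteMeasure_of_le ν' hle
  have hint : ∀ (ρ : Measure X) [IsFiniteMeasure ρ], Integrable φ ρ := fun ρ _ =>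
    (integrable_const C).mono' hφ.aestronglyMeasurable (.of_forall hC)
  have hsplit : ∫ x, φ x ∂ν' = ∫ x, φ x ∂(ν' - ν) + ∫ x, φ x ∂ν := by
    conv_lhs => rw [← Measure.sub_add_cancel_of_le hle]
    exact integral_add_measure (hint _) (hint _)
  rw [hsplit, add_sub_cancel_right]
  exact norm_integral_le_of_norm_le_const (.of_forall hC)

variable {μ : Measure X} {S T : Set X} {φ : X → E} {C : ℝ}

/- `T` need not be measurable (compact sets of a non-Hausdorff group need not be Borel), so `S` is
compared with `S ∩ T` through the difference of the restricted measures. -/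
lemma norm_setIntegral_sub_setIntegral_inter_le (hS : μ S ≠ ⊤) (hφ : StronglyMeasurable φ)
    (hC : ∀ x, ‖φ x‖ ≤ C) :
    ‖∫ x in S, φ x ∂μ - ∫ x in S ∩ T, φ x ∂μ‖ ≤ C * μ.real (S \ T) := by
  rcases isEmpty_or_nonempty X with _ | ⟨⟨x₀⟩⟩
  · simp [Measure.eq_zero_of_isEmpty μ]
  have : Fact (μ S < ⊤) := ⟨hS.lt_top⟩
  have hle : μ.restrict (S ∩ T) ≤ μ.restrict S := Measure.restrict_mono Set.inter_subset_left le_rfl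
  have hrest : (μ.restrict S - μ.restrict (S ∩ T)).real Set.univ ≤ μ.real (S \ T) := by
    have hfin : IsFiniteMeasure (μ.restrict (S ∩ T)) := isFiniteMeasure_of_le _ hle
    have hdiff : μ S - μ (S ∩ T) ≤ μ (S \ T) :=
      tsub_le_iff_left.mpr (measure_le_inter_add_sdiff μ S T)
    rw [Measure.real, Measure.sub_apply MeasurableSet.univ hle, Measure.restrict_apply_univ,
      Measure.restrict_apply_univ]
    exact ENNReal.toReal_mono (measure_ne_top_of_subset Set.sdiff_subset hS) hdiff
  calc _ ≤ C * (μ.restrict S - μ.restrict (S ∩ T)).real Set.univ :=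
        norm_integral_sub_integral_le_of_le hle hφ hC
    _ ≤ C * μ.real (S \ T) :=
        mul_le_mul_of_nonneg_left hrest ((norm_nonneg _).trans (hC x₀))

lemma norm_setIntegral_sub_setIntegral_le (hS : μ S ≠ ⊤) (hT : μ T ≠ ⊤)
    (hφ : StronglyMeasurable φ) (hC : ∀ x, ‖φ x‖ ≤ C) :
    ‖∫ x in S, φ x ∂μ - ∫ x in T, φ x ∂μ‖ ≤ C * (μ.real (S \ T) + μ.real (T \ S)) := by
  have hS' := norm_setIntegral_sub_setIntegral_inter_le (T := T) hS hφ hC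
  have hT' := norm_setIntegral_sub_setIntegral_inter_le (T := S) hT hφ hC
  rw [Set.inter_comm] at hT'
  calc _ = ‖(∫ x in S, φ x ∂μ - ∫ x in S ∩ T, φ x ∂μ)
          - (∫ x in T, φ x ∂μ - ∫ x in S ∩ T, φ x ∂μ)‖ := by abel_nf
    _ ≤ _ := (norm_sub_le _ _).trans (by linarith)

end SetIntegralDifference

section VanHove

variable {H : Type*} [AddCommGroup H] [UniformSpace H]

lemma vadd_diff_subset_vhBoundary {K B : Set H} {t : H} (ht : t ∈ K) :
    (t +ᵥ B) \ B ⊆ vhBoundary K B := by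
  rintro _ ⟨⟨b, hb, rfl⟩, hnot⟩
  refine Or.inl ⟨subset_closure ?_, hnot⟩
  simpa only [vadd_eq_add, add_comm t] using Set.add_mem_add hb ht

lemma diff_vadd_subset_vhBoundary {K B : Set H} {t : H} (ht : -t ∈ K) :
    B \ (t +ᵥ B) ⊆ vhBoundary K B := by
  rintro x ⟨hx, hnot⟩
  refine Or.inr ⟨Set.mem_sub.mpr ⟨x - t, fun h => hnot ⟨x - t, h, ?_⟩, -t, ht, ?_⟩,
    subset_closure hx⟩
  · simp [vadd_eq_add]
  · abel

variable [IsUniformAddGroup H] [MeasurableSpace H]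

lemma measure_vhBoundary_lt_top (μ : Measure H) [IsFiniteMeasureOnCompacts μ] {K B : Set H}
    (hK : IsCompact K) (hB : IsCompact B) : μ (vhBoundary K B) < ⊤ :=
  (measure_mono (Set.union_subset_union Set.sdiff_subset Set.inter_subset_right)).trans_lt
    (measure_union_lt_top (hB.add hK).closure.measure_lt_top hB.closure.measure_lt_top)

end VanHove

section Averages

variable {H E : Type*} [AddCommGroup H] [UniformSpace H] [IsUniformAddGroup H] [MeasurableSpace H]
  [NormedAddCommGroup E] [NormedSpace ℝ E]

lemma IsVanHove.tendsto_inv_smul_setIntegral_sub_setIntegral_vadd {μ : Measure H}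
    [IsFiniteMeasureOnCompacts μ] {A : ℕ → Set H} (hA : IsVanHove μ A) (t : H) {φ : H → E}
    (hφ : StronglyMeasurable φ) {C : ℝ} (hC : ∀ x, ‖φ x‖ ≤ C) :
    Tendsto (fun n => (μ (A n)).toReal⁻¹ • (∫ x in A n, φ x ∂μ - ∫ x in t +ᵥ A n, φ x ∂μ))
      atTop (𝓝 0) := by
  obtain ⟨hcompact, -, hboundary⟩ := hA
  set K : Set H := {t, -t}
  have hK : IsCompact K := (Set.toFinite K).isCompact
  have hratio : Tendsto (fun n => μ.real (vhBoundary K (A n)) / μ.real (A n)) atTop (𝓝 0) := by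
    simpa [Function.comp_def, Measure.real, ENNReal.toReal_div] using
      (ENNReal.tendsto_toReal ENNReal.zero_ne_top).comp (hboundary K hK)
  refine squeeze_zero_norm (fun n => ?_) (by simpa using hratio.const_mul (2 * C))
  have hD : μ (vhBoundary K (A n)) ≠ ⊤ := (measure_vhBoundary_lt_top μ hK (hcompact n)).ne
  have hout : μ.real ((t +ᵥ A n) \ A n) ≤ μ.real (vhBoundary K (A n)) :=
    measureReal_mono (vadd_diff_subset_vhBoundary (by simp [K])) hD
  have hin : μ.real (A n \ (t +ᵥ A n)) ≤ μ.real (vhBoundary K (A n)) :=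
    measureReal_mono (diff_vadd_subset_vhBoundary (by simp [K])) hD
  have hC₀ : 0 ≤ C := (norm_nonneg _).trans (hC 0)
  calc ‖(μ (A n)).toReal⁻¹ • (∫ x in A n, φ x ∂μ - ∫ x in t +ᵥ A n, φ x ∂μ)‖
      = (μ.real (A n))⁻¹ * ‖∫ x in A n, φ x ∂μ - ∫ x in t +ᵥ A n, φ x ∂μ‖ := by
        rw [norm_smul, norm_inv, Real.norm_of_nonneg ENNReal.toReal_nonneg, Measure.real]
    _ ≤ (μ.real (A n))⁻¹ * (C * (μ.real (A n \ (t +ᵥ A n)) + μ.real ((t +ᵥ A n) \ A n))) := by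
        gcongr
        exact norm_setIntegral_sub_setIntegral_le (hcompact n).measure_lt_top.ne
          ((hcompact n).vadd t).measure_lt_top.ne hφ hC
    _ ≤ (μ.real (A n))⁻¹ * (C * (2 * μ.real (vhBoundary K (A n)))) := by gcongr; linarith
    _ = 2 * C * (μ.real (vhBoundary K (A n)) / μ.real (A n)) := by ring

end Averages

section Translation

variable {H E : Type*} [AddCommGroup H] [MeasurableSpace H] [MeasurableAdd H]
  [NormedAddCommGroup E] [NormedSpace ℝ E] (μ : Measure H) [μ.IsAddLeftInvariant]

lemma setIntegral_vadd (t : H) (B : Set H) (φ : H → E) :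
    ∫ u in t +ᵥ B, φ u ∂μ = ∫ s in B, φ (t + s) ∂μ := by
  conv_lhs => rw [← map_add_left_eq_self μ t]
  rw [← MeasurableEquiv.coe_addLeft, setIntegral_map_equiv, MeasurableEquiv.coe_addLeft]
  congr 2
  simpa using Set.preimage_vadd t (t +ᵥ B)

lemma conj_setIntegral_mul_tilde (f g : H → ℂ) (t : H) (B : Set H) :
    conj (∫ s in B, f s * tilde g (-t - s) ∂μ) = ∫ u in t +ᵥ B, g u * tilde f (t - u) ∂μ := by
  rw [setIntegral_vadd, ← integral_conj]
  congr 1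
  funext s
  simp [tilde, mul_comm, add_comm]

end Translation

/-- if `f ⊛_A g̃` exists then `g ⊛_A f̃` exists and equals `(f ⊛_A g̃)~`. -/
theorem stmt2 (μ : Measure G) [μ.IsAddHaarMeasure] (A : ℕ → Set G)
    (hA : IsVanHove μ A) (f g : G → ℂ) (hf : IsCu f) (hg : IsCu g) (F : G → ℂ)
    (h : EberleinTendsto μ A f (tilde g) F) :
    EberleinTendsto μ A g (tilde f) (tilde F) := by
  intro t
  obtain ⟨hf, Cf, hCf⟩ := hf
  obtain ⟨hg, Cg, hCg⟩ := hg
  set φ : G → ℂ := fun u => g u * tilde f (t - u)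
  have hφ : Continuous φ :=
    hg.continuous.mul (Complex.continuous_conj.comp (hf.continuous.comp (by fun_prop)))
  have hφC : ∀ u, ‖φ u‖ ≤ Cg * Cf := fun u => by
    simpa [φ, tilde] using
      mul_le_mul (hCg u) (hCf _) (norm_nonneg _) ((norm_nonneg _).trans (hCg u))
  have htranslate : Tendsto (fun n => (μ (A n)).toReal⁻¹ • ∫ u in t +ᵥ A n, φ u ∂μ) atTop
      (𝓝 (tilde F t)) := by
    have hconj := (Complex.continuous_conj.tendsto _).comp (h (-t))
    simp only [Function.comp_def, RCLike.conj_smul, conj_setIntegral_mul_tilde] at hconj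
    exact hconj
  have hboundary := hA.tendsto_inv_smul_setIntegral_sub_setIntegral_vadd t hφ.stronglyMeasurable hφC
  simpa [smul_sub] using htranslate.add hboundary
end
end

section
/- Let f, g ∈ Cu(G) and t ∈ G, and let A be a van Hove sequence. If the Eberlein convolution f ⊛_A g exists, then the Eberlein convolution (T_t f) ⊛_A g exists and (T_t f) ⊛_A g = T_t (f ⊛_A g). -/
open MeasureTheory Filter Topology Pointwise ComplexConjugate
open scoped BigOperators

noncomputable section

variable {G : Type*} [AddCommGroup G] [UniformSpace G] [IsUniformAddGroup G]
  [LocallyCompactSpace G] [SecondCountableTopology G]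
  [MeasurableSpace G] [BorelSpace G]

/-!
Substituting `s ↦ s + t` turns the `A_n`-average of `T_t f · g(u - ·)` into the average of
`f · g(u - t - ·)` over the translate `A_n - t`. Both averages are over sets of the same
measure, so they differ by at most `‖f‖_∞ ‖g‖_∞ |(A_n - t) Δ A_n| / |A_n|`, and the
symmetric difference lies in the van Hove boundary `∂^{t, -t} A_n`, which is negligible.
-/

open scoped ENNReal symmDiff

theorem IsCompact.restrict_closure {X : Type*} [TopologicalSpace X] [R1Space X]
    [MeasurableSpace X] [BorelSpace X] {μ : Measure X} {K : Set X} (hK : IsCompact K)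
    (hμK : μ K ≠ ∞) : μ.restrict (closure K) = μ.restrict K :=
  le_antisymm
    (Measure.restrict_toMeasurable hμK ▸ Measure.restrict_mono
      (hK.closure_subset_measurableSet (measurableSet_toMeasurable μ K)
        (subset_toMeasurable μ K)) le_rfl)
    (Measure.restrict_mono subset_closure le_rfl)

theorem norm_setIntegral_sub_setIntegral_le_s4 {X E : Type*} [MeasurableSpace X]
    [NormedAddCommGroup E] [NormedSpace ℝ E] {μ : Measure X} {s t : Set X} {f : X → E}
    {C : ℝ} (hs : MeasurableSet s) (ht : MeasurableSet t) (hμs : μ s ≠ ∞)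
    (hμt : μ t ≠ ∞) (hf : AEStronglyMeasurable f μ) (hC : ∀ x, ‖f x‖ ≤ C) :
    ‖∫ x in s, f x ∂μ - ∫ x in t, f x ∂μ‖ ≤ C * μ.real (s ∆ t) := by
  have hintegrable {u : Set X} (hu : μ u ≠ ∞) : IntegrableOn f u μ :=
    .of_bound hu.lt_top hf.restrict C (.of_forall hC)
  have hbound {u v : Set X} (hu : μ u ≠ ∞) :
      ‖∫ x in u \ v, f x ∂μ‖ ≤ C * μ.real (u \ v) :=
    norm_setIntegral_le_of_norm_le_const ((measure_mono Set.sdiff_subset).trans_lt hu.lt_top)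
      fun x _ => hC x
  rw [← integral_inter_add_sdiff ht (hintegrable hμs),
    ← integral_inter_add_sdiff hs (hintegrable hμt),
    Set.inter_comm t s, add_sub_add_left_eq_sub, measureReal_symmDiff_eq hs ht hμs hμt,
    mul_add]
  exact (norm_sub_le _ _).trans (add_le_add (hbound hμs) (hbound hμt))

theorem preimage_add_closure_symmDiff_subset_vhBoundary {X : Type*} [AddCommGroup X]
    [UniformSpace X] [ContinuousAdd X] {K B : Set X} {t : X} (ht : t ∈ K) (hnt : -t ∈ K) :
    ((· + t) ⁻¹' closure B) ∆ closure B ⊆ vhBoundary K B := by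
  rintro x (⟨hxt, hx⟩ | ⟨hx, hxt⟩)
  · refine Or.inl ⟨?_, fun hB => hx (subset_closure hB)⟩
    simpa using map_mem_closure (continuous_add_const (-t)) hxt
      fun b hb => Set.add_mem_add hb hnt
  · have hxtB : x + t ∈ Bᶜ := fun hB => hxt (subset_closure hB)
    exact Or.inr ⟨by simpa using Set.sub_mem_sub hxtB ht, hx⟩

theorem IsVanHove.tendsto_average_comp_sub_right {X E : Type*} [AddCommGroup X]
    [UniformSpace X] [IsUniformAddGroup X] [MeasurableSpace X] [BorelSpace X]
    [NormedAddCommGroup E] [NormedSpace ℝ E] {μ : Measure X} [IsFiniteMeasureOnCompacts μ]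
    [μ.IsAddRightInvariant] {A : ℕ → Set X} (hA : IsVanHove μ A) {f : X → E} {C : ℝ}
    (hf : AEStronglyMeasurable f μ) (hC : ∀ x, ‖f x‖ ≤ C) (t : X) {c : E}
    (hfc : Tendsto (fun n => (μ (A n)).toReal⁻¹ • ∫ s in A n, f s ∂μ) atTop (𝓝 c)) :
    Tendsto (fun n => (μ (A n)).toReal⁻¹ • ∫ s in A n, f (s - t) ∂μ) atTop (𝓝 c) := by
  obtain ⟨hAc, -, hAbd⟩ := hA
  have hμA n : μ (A n) ≠ ∞ := (hAc n).measure_lt_top.ne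
  have hμclosure n : μ (closure (A n)) ≠ ∞ := (hAc n).closure.measure_lt_top.ne
  -- `A n` need not be measurable (`X` need not be Hausdorff), but its closure is.
  have hint_closure n : ∫ s in A n, f s ∂μ = ∫ s in closure (A n), f s ∂μ := by
    rw [(hAc n).restrict_closure (hμA n)]
  have hint_translate n :
      ∫ s in A n, f (s - t) ∂μ = ∫ s in (· + t) ⁻¹' closure (A n), f s ∂μ := by
    have hpre : (· - t) ⁻¹' ((· + t) ⁻¹' closure (A n)) = closure (A n) := by ext; simp
    have := (measurePreserving_sub_right μ t).setIntegral_preimage_emb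
      (MeasurableEquiv.subRight t).measurableEmbedding f ((· + t) ⁻¹' closure (A n))
    rwa [hpre, (hAc n).restrict_closure (hμA n)] at this
  set D := fun n => ((· + t) ⁻¹' closure (A n)) ∆ closure (A n)
  have hratio : Tendsto (fun n => μ (D n) / μ (A n)) atTop (𝓝 0) := by
    refine tendsto_of_tendsto_of_tendsto_of_le_of_le tendsto_const_nhds
      (hAbd {t, -t} (Set.toFinite _).isCompact) (fun _ => bot_le) fun n => ?_
    exact ENNReal.div_le_div_right (measure_mono (μ := μ)
      (preimage_add_closure_symmDiff_subset_vhBoundary (K := {t, -t}) (t := t)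
        (by simp) (by simp))) _
  have hbound n :
      ‖(μ (A n)).toReal⁻¹ • ∫ s in A n, f (s - t) ∂μ - (μ (A n)).toReal⁻¹ • ∫ s in A n, f s ∂μ‖
        ≤ C * (μ (D n) / μ (A n)).toReal := by
    rw [← smul_sub, norm_smul, Real.norm_of_nonneg (by positivity), hint_translate,
      hint_closure, ENNReal.toReal_div, mul_div_assoc', div_eq_inv_mul]
    refine mul_le_mul_of_nonneg_left (norm_setIntegral_sub_setIntegral_le_s4
      (isClosed_closure.preimage (continuous_add_const t)).measurableSet
      isClosed_closure.measurableSet ?_ (hμclosure n) hf hC) (by positivity)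
    rw [measure_preimage_add_right]
    exact hμclosure n
  have hdiff := squeeze_zero_norm hbound (by
    simpa using ((ENNReal.tendsto_toReal ENNReal.zero_ne_top).comp hratio).const_mul C)
  simpa using hdiff.add hfc

/-- the Eberlein convolution commutes with translation in the first argument. -/
theorem stmt4 (μ : Measure G) [μ.IsAddHaarMeasure] (A : ℕ → Set G)
    (hA : IsVanHove μ A) (f g : G → ℂ) (hf : IsCu f) (hg : IsCu g) (t : G)
    (F : G → ℂ) (h : EberleinTendsto μ A f g F) :
    EberleinTendsto μ A (shiftBy t f) g (shiftBy t F) := by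
  obtain ⟨hfu, Cf, hCf⟩ := hf
  obtain ⟨hgu, Cg, hCg⟩ := hg
  intro u
  have hbound x : ‖f x * g (u - t - x)‖ ≤ Cf * Cg :=
    (norm_mul _ _).trans_le
      (mul_le_mul (hCf x) (hCg _) (norm_nonneg _) ((norm_nonneg _).trans (hCf x)))
  have hmeas : AEStronglyMeasurable (fun x => f x * g (u - t - x)) μ :=
    (hfu.continuous.mul (hgu.continuous.comp (continuous_sub_left _))).aestronglyMeasurable
  simpa only [shiftBy, sub_sub_sub_cancel_right] using
    hA.tendsto_average_comp_sub_right hmeas hbound t (h (u - t))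
end
end

section
/- Let f, g ∈ Cu(G) and let A be a van Hove sequence. Assume that for each ε > 0 there exists h ∈ Cu(G) such that: (a) ‖g − h‖_{b,2,A} < ε, and (b) the Eberlein convolution f ⊛_A h̃ exists and ‖f ⊛_A h̃‖_∞ < ε. Then the Eberlein convolution f ⊛_A g̃ exists and f ⊛_A g̃ = 0. -/
open MeasureTheory Filter Topology Pointwise ComplexConjugate
open scoped BigOperators

noncomputable section

variable {G : Type*} [AddCommGroup G] [UniformSpace G] [IsUniformAddGroup G]
  [LocallyCompactSpace G] [SecondCountableTopology G]
  [MeasurableSpace G] [BorelSpace G]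

/-! Put `u = g - h`. Along `A_n` the average defining `(f ⊛ g̃)(t)` is the one for `h̃` plus
the average of `f(s) · conj (u (s - t))`. The first tends to `H t`, of norm `< ε`. The second is
at most `‖f‖_∞` times the mean of `‖u (· - t)‖` over `A_n`, which by Jensen is at most the square
root of the mean of `‖u (· - t)‖²`. Translating `A_n` by `-t` changes that mean only by
`‖u‖_∞² |∂^{-t} A_n| / |A_n| → 0` (van Hove), so eventually it is below `‖u‖_{b,2,A}² < ε²`. -/

section Average

variable {α : Type*} [MeasurableSpace α] {μ : Measure α} {s : Set α}

lemma norm_setAverage_le_of_norm_le {E : Type*} [NormedAddCommGroup E] [NormedSpace ℝ E]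
    {F : α → E} {C : ℝ} (hs : μ s ≠ ⊤) (hC₀ : 0 ≤ C) (hC : ∀ x ∈ s, ‖F x‖ ≤ C) :
    ‖⨍ x in s, F x ∂μ‖ ≤ C := by
  rw [setAverage_eq, norm_smul, Real.norm_of_nonneg (inv_nonneg.2 measureReal_nonneg)]
  calc (μ.real s)⁻¹ * ‖∫ x in s, F x ∂μ‖ ≤ (μ.real s)⁻¹ * (C * μ.real s) := by
        gcongr; exact norm_setIntegral_le_of_norm_le_const hs.lt_top hC
    _ ≤ C := by
        rcases eq_or_ne (μ.real s) 0 with h | h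
        · simp [h, hC₀]
        · rw [mul_comm C, ← mul_assoc, inv_mul_cancel₀ h, one_mul]

lemma setAverage_add {E : Type*} [NormedAddCommGroup E] [NormedSpace ℝ E] {F F' : α → E}
    (hF : IntegrableOn F s μ) (hF' : IntegrableOn F' s μ) :
    ⨍ x in s, (F x + F' x) ∂μ = ⨍ x in s, F x ∂μ + ⨍ x in s, F' x ∂μ := by
  simp only [setAverage_eq, integral_add hF hF', smul_add]

lemma norm_setAverage_mul_le {R : Type*} [NormedRing R] [NormedSpace ℝ R] {f v : α → R} {C : ℝ}
    (hf : ∀ x, ‖f x‖ ≤ C) (hv : IntegrableOn (fun x => ‖v x‖) s μ) :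
    ‖⨍ x in s, f x * v x ∂μ‖ ≤ C * ⨍ x in s, ‖v x‖ ∂μ := by
  rw [setAverage_eq, setAverage_eq, norm_smul,
    Real.norm_of_nonneg (inv_nonneg.2 measureReal_nonneg), smul_eq_mul, mul_left_comm,
    ← integral_const_mul]
  gcongr
  refine (norm_integral_le_integral_norm _).trans
    (integral_mono_of_nonneg (ae_of_all _ fun x => norm_nonneg _) (hv.const_mul C) (ae_of_all _ ?_))
  exact fun x => (norm_mul_le _ _).trans (mul_le_mul_of_nonneg_right (hf x) (norm_nonneg _))

lemma sq_setAverage_le_setAverage_sq {φ : α → ℝ} (h₀ : μ s ≠ 0) (hs : μ s ≠ ⊤)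
    (hφ : IntegrableOn φ s μ) (hφ2 : IntegrableOn (fun x => φ x ^ 2) s μ) :
    (⨍ x in s, φ x ∂μ) ^ 2 ≤ ⨍ x in s, φ x ^ 2 ∂μ :=
  (Even.convexOn_pow even_two).map_set_average_le (continuous_pow 2).continuousOn isClosed_univ
    h₀ hs (ae_of_all _ fun _ => Set.mem_univ _) hφ hφ2

end Average

lemma IsCu.sub {X : Type*} [UniformSpace X] {f g : X → ℂ} (hf : IsCu f) (hg : IsCu g) :
    IsCu fun x => f x - g x := by
  obtain ⟨hfu, Cf, hCf⟩ := hf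
  obtain ⟨hgu, Cg, hCg⟩ := hg
  exact ⟨hfu.sub hgu, Cf + Cg, fun x => (norm_sub_le _ _).trans (add_le_add (hCf x) (hCg x))⟩

lemma tilde_sub {X : Type*} [AddCommGroup X] (g : X → ℂ) (t s : X) :
    tilde g (t - s) = conj (g (s - t)) := by
  simp only [tilde, neg_sub]

lemma norm_tilde {X : Type*} [AddCommGroup X] (g : X → ℂ) (x : X) : ‖tilde g x‖ = ‖g (-x)‖ :=
  Complex.norm_conj _

lemma norm_le_supN {X : Type*} {H : X → ℂ} {C : ℝ} (hH : ∀ x, ‖H x‖ ≤ C) (x : X) :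
    ‖H x‖ ≤ supN H :=
  le_ciSup (f := fun x => ‖H x‖) ⟨C, Set.forall_mem_range.2 hH⟩ x

section Besicovitch

variable {X : Type*} [MeasurableSpace X]

-- No boundedness is needed: in `ℝ` the `limsup` of a sequence unbounded above is `sInf ∅ = 0`.
lemma bNorm_nonneg (μ : Measure X) (A : ℕ → Set X) (p : ℝ) (u : X → ℂ) :
    0 ≤ bNorm μ A p u := by
  refine Real.sInf_nonneg fun a ha => ?_
  obtain ⟨n, hn⟩ := (Filter.eventually_map.1 ha).exists
  exact (Real.rpow_nonneg (mul_nonneg (inv_nonneg.2 ENNReal.toReal_nonneg)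
    (integral_nonneg fun x => Real.rpow_nonneg (norm_nonneg _) p)) _).trans hn

lemma eventually_setAverage_sq_lt_of_bNorm_lt {μ : Measure X} {A : ℕ → Set X}
    (hA : ∀ n, μ (A n) ≠ ⊤) {u : X → ℂ} {M δ : ℝ} (hu : ∀ x, ‖u x‖ ≤ M) (hδ : bNorm μ A 2 u < δ) :
    ∀ᶠ n in atTop, ⨍ x in A n, ‖u x‖ ^ 2 ∂μ < δ ^ 2 := by
  have hsqrt : bNorm μ A 2 u = limsup (fun n => √(⨍ x in A n, ‖u x‖ ^ 2 ∂μ)) atTop := by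
    simp only [bNorm, Real.sqrt_eq_rpow, setAverage_eq, smul_eq_mul, measureReal_def,
      Real.rpow_two]
  have hbdd : IsBoundedUnder (· ≤ ·) atTop fun n => √(⨍ x in A n, ‖u x‖ ^ 2 ∂μ) := by
    refine isBoundedUnder_of ⟨√(M ^ 2), fun n => Real.sqrt_le_sqrt ?_⟩
    refine (Real.le_norm_self _).trans
      (norm_setAverage_le_of_norm_le (hA n) (sq_nonneg M) fun x _ => ?_)
    rw [norm_pow, norm_norm]
    exact pow_le_pow_left₀ (norm_nonneg _) (hu x) 2
  exact (eventually_lt_of_limsup_lt (hsqrt ▸ hδ) hbdd).mono fun n hn => Real.lt_sq_of_sqrt_lt hn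

end Besicovitch

section VanHove

variable {X : Type*} [AddCommGroup X] [MeasurableSpace X] {μ : Measure X}

lemma setIntegral_comp_sub_le [MeasurableAdd X] [μ.IsAddRightInvariant] {φ : X → ℝ} {C : ℝ}
    (hφ : Measurable φ) (hφ₀ : 0 ≤ φ) (hφC : ∀ x, φ x ≤ C) {s : Set X} (hs : μ s ≠ ⊤) (t : X) :
    ∫ x in s, φ (x - t) ∂μ ≤ ∫ x in s, φ x ∂μ + C * μ.real ((fun x => x - t) '' s \ s) := by
  have hB : μ ((fun x => x - t) '' s) = μ s := by
    rw [Set.image_sub_right]; exact measure_preimage_add_right μ t s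
  set B := (fun x => x - t) '' s
  have hBs : μ (B \ s) ≠ ⊤ := ((measure_mono Set.sdiff_subset).trans_lt (hB ▸ hs.lt_top)).ne
  have hint (r : Set X) (hr : μ r ≠ ⊤) : IntegrableOn φ r μ :=
    Measure.integrableOn_of_bounded hr hφ.aestronglyMeasurable (M := C)
      (ae_of_all _ fun x => by rw [Real.norm_of_nonneg (hφ₀ x)]; exact hφC x)
  have hcover : μ.restrict B ≤ μ.restrict s + μ.restrict (B \ s) :=
    (Measure.restrict_mono (by rw [Set.union_sdiff_self]; exact Set.subset_union_right)
      le_rfl).trans (Measure.restrict_union_le _ _)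
  rw [← (measurePreserving_sub_right μ t).setIntegral_image_emb (measurableEmbedding_subRight t)]
  calc ∫ x in B, φ x ∂μ ≤ ∫ x, φ x ∂(μ.restrict s + μ.restrict (B \ s)) :=
        integral_mono_measure hcover (ae_of_all _ hφ₀)
          (Integrable.add_measure (hint s hs) (hint (B \ s) hBs))
    _ = ∫ x in s, φ x ∂μ + ∫ x in B \ s, φ x ∂μ :=
        integral_add_measure (hint s hs) (hint (B \ s) hBs)
    _ ≤ ∫ x in s, φ x ∂μ + C * μ.real (B \ s) := by
        gcongr
        calc ∫ x in B \ s, φ x ∂μ ≤ ∫ _ in B \ s, C ∂μ :=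
              integral_mono (hint _ hBs) (integrableOn_const hBs) hφC
          _ = C * μ.real (B \ s) := by rw [setIntegral_const, smul_eq_mul, mul_comm]

lemma IsVanHove.tendsto_measureReal_image_sub_diff_div [UniformSpace X] {A : ℕ → Set X}
    (hA : IsVanHove μ A) (t : X) :
    Tendsto (fun n => μ.real ((fun x => x - t) '' A n \ A n) / μ.real (A n)) atTop (𝓝 0) := by
  have hsub n : (fun x => x - t) '' A n \ A n ⊆ vhBoundary {-t} (A n) := by
    rintro _ ⟨⟨a, ha, rfl⟩, hat⟩
    refine Or.inl ⟨subset_closure ?_, hat⟩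
    simpa [sub_eq_add_neg] using Set.add_mem_add ha (Set.mem_singleton (-t))
  have hlim : Tendsto (fun n => μ ((fun x => x - t) '' A n \ A n) / μ (A n)) atTop (𝓝 0) :=
    tendsto_of_tendsto_of_tendsto_of_le_of_le tendsto_const_nhds (hA.2.2 _ isCompact_singleton)
      (fun _ => bot_le) fun n => ENNReal.div_le_div_right (measure_mono (hsub n)) _
  simpa [Function.comp_def, ENNReal.toReal_div, measureReal_def] using
    (ENNReal.tendsto_toReal ENNReal.zero_ne_top).comp hlim

lemma IsVanHove.eventually_setAverage_sq_comp_sub_lt [UniformSpace X] [MeasurableAdd X]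
    [IsFiniteMeasureOnCompacts μ] [μ.IsAddRightInvariant] {A : ℕ → Set X} (hA : IsVanHove μ A)
    {u : X → ℂ} {M δ : ℝ} (hum : Measurable u) (hu : ∀ x, ‖u x‖ ≤ M) (hδ : bNorm μ A 2 u < δ)
    (t : X) : ∀ᶠ n in atTop, ⨍ x in A n, ‖u (x - t)‖ ^ 2 ∂μ < δ ^ 2 := by
  obtain ⟨δ', hδ', hδ'δ⟩ := exists_between hδ
  have hδ'₀ : 0 < δ' := (bNorm_nonneg μ A 2 u).trans_lt hδ'
  have hfin n : μ (A n) ≠ ⊤ := (hA.1 n).measure_ne_top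
  have hsmall : ∀ᶠ n in atTop,
      M ^ 2 * (μ.real ((fun x => x - t) '' A n \ A n) / μ.real (A n)) < δ ^ 2 - δ' ^ 2 := by
    refine ((hA.tendsto_measureReal_image_sub_diff_div t).const_mul (M ^ 2)).eventually_lt_const ?_
    rw [mul_zero, sub_pos]
    exact pow_lt_pow_left₀ hδ'δ hδ'₀.le two_ne_zero
  filter_upwards [eventually_setAverage_sq_lt_of_bNorm_lt hfin hu hδ', hsmall] with n hn hsmall_n
  have hcomp := setIntegral_comp_sub_le (μ := μ) (hum.norm.pow_const 2)
    (fun x => sq_nonneg ‖u x‖) (fun x => pow_le_pow_left₀ (norm_nonneg _) (hu x) 2) (hfin n) t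
  calc ⨍ x in A n, ‖u (x - t)‖ ^ 2 ∂μ
      ≤ ⨍ x in A n, ‖u x‖ ^ 2 ∂μ
          + M ^ 2 * (μ.real ((fun x => x - t) '' A n \ A n) / μ.real (A n)) := by
        rw [setAverage_eq, setAverage_eq, smul_eq_mul, smul_eq_mul]
        calc _ ≤ (μ.real (A n))⁻¹ * (∫ x in A n, ‖u x‖ ^ 2 ∂μ
                  + M ^ 2 * μ.real ((fun x => x - t) '' A n \ A n)) := by gcongr
          _ = _ := by ring
    _ < δ' ^ 2 + (δ ^ 2 - δ' ^ 2) := add_lt_add hn hsmall_n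
    _ = δ ^ 2 := by ring

lemma IsVanHove.eventually_setAverage_norm_comp_sub_lt [UniformSpace X] [MeasurableAdd X]
    [IsFiniteMeasureOnCompacts μ] [μ.IsAddRightInvariant] {A : ℕ → Set X} (hA : IsVanHove μ A)
    {u : X → ℂ} {M δ : ℝ} (hum : Measurable u) (hu : ∀ x, ‖u x‖ ≤ M) (hδ : bNorm μ A 2 u < δ)
    (t : X) : ∀ᶠ n in atTop, ⨍ x in A n, ‖u (x - t)‖ ∂μ < δ := by
  have hδ₀ : 0 < δ := (bNorm_nonneg μ A 2 u).trans_lt hδ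
  have hv : Measurable fun x => ‖u (x - t)‖ :=
    (hum.comp (measurableEmbedding_subRight t).measurable).norm
  have hint n {ψ : X → ℝ} (hψ : Measurable ψ) {C : ℝ} (hψC : ∀ x, ‖ψ x‖ ≤ C) :
      IntegrableOn ψ (A n) μ :=
    Measure.integrableOn_of_bounded (hA.1 n).measure_ne_top hψ.aestronglyMeasurable
      (ae_of_all _ hψC)
  filter_upwards [hA.eventually_setAverage_sq_comp_sub_lt hum hu hδ t] with n hn
  refine lt_of_pow_lt_pow_left₀ 2 hδ₀.le ((sq_setAverage_le_setAverage_sq (hA.2.1 n).ne'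
    (hA.1 n).measure_ne_top (hint n hv (C := M) ?_)
    (hint n (hv.pow_const 2) (C := M ^ 2) ?_)).trans_lt hn)
  · intro x
    rw [norm_norm]; exact hu _
  · intro x
    rw [norm_pow, norm_norm]; exact pow_le_pow_left₀ (norm_nonneg _) (hu _) 2

end VanHove

section Eberlein

variable {X : Type*} [AddCommGroup X] [MeasurableSpace X] {μ : Measure X} {A : ℕ → Set X}

lemma eberleinTendsto_iff {f g F : X → ℂ} :
    EberleinTendsto μ A f g F ↔
      ∀ t, Tendsto (fun n => ⨍ s in A n, f s * g (t - s) ∂μ) atTop (𝓝 (F t)) := by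
  simp only [EberleinTendsto, setAverage_eq, measureReal_def]

lemma EberleinTendsto.norm_le (hA : ∀ n, μ (A n) ≠ ⊤) {f g F : X → ℂ}
    (hF : EberleinTendsto μ A f g F) {Cf Cg : ℝ} (hf : ∀ x, ‖f x‖ ≤ Cf) (hg : ∀ x, ‖g x‖ ≤ Cg)
    (t : X) : ‖F t‖ ≤ Cf * Cg := by
  have hCf₀ : 0 ≤ Cf := (norm_nonneg _).trans (hf 0)
  refine le_of_tendsto' (eberleinTendsto_iff.1 hF t).norm fun n => ?_
  refine norm_setAverage_le_of_norm_le (hA n) (mul_nonneg hCf₀ ((norm_nonneg _).trans (hg 0)))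
    fun s _ => ?_
  rw [norm_mul]
  exact mul_le_mul (hf s) (hg _) (norm_nonneg _) hCf₀

lemma setAverage_mul_tilde_eq_add [TopologicalSpace X] [IsTopologicalAddGroup X]
    [OpensMeasurableSpace X] [IsLocallyFiniteMeasure μ] {s : Set X} (hs : IsCompact s)
    {f g h : X → ℂ} (hf : Continuous f) (hg : Continuous g) (hh : Continuous h) (t : X) :
    ⨍ x in s, f x * tilde g (t - x) ∂μ = ⨍ x in s, f x * tilde h (t - x) ∂μ
      + ⨍ x in s, f x * conj (g (x - t) - h (x - t)) ∂μ := by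
  have hint {v : X → ℂ} (hv : Continuous v) : IntegrableOn (fun x => f x * conj (v (x - t))) s μ :=
    (hf.mul (Complex.continuous_conj.comp (hv.comp (continuous_sub_right t)))).locallyIntegrable
      |>.integrableOn_isCompact hs
  simp only [tilde_sub]
  rw [← setAverage_add (hint hh) (hint (v := fun x => g x - h x) (hg.sub hh))]
  congr 1
  funext x
  rw [map_sub]
  ring

end Eberlein

/-- auxiliary approximation lemma: if `g` can be `b,2,A`-approximated by
functions `h ∈ Cu(G)` for which `f ⊛_A h̃` exists with small sup norm, then `f ⊛_A g̃`
exists and vanishes. -/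
theorem stmt13 (μ : Measure G) [μ.IsAddHaarMeasure] (A : ℕ → Set G)
    (hA : IsVanHove μ A) (f g : G → ℂ) (hf : IsCu f) (hg : IsCu g)
    (happrox : ∀ ε : ℝ, 0 < ε → ∃ h : G → ℂ, IsCu h ∧
      bNorm μ A 2 (fun x => g x - h x) < ε ∧
      ∃ H : G → ℂ, EberleinTendsto μ A f (tilde h) H ∧ supN H < ε) :
    EberleinTendsto μ A f (tilde g) (fun _ => 0) := by
  obtain ⟨Cf, hCf⟩ := hf.2
  have hCf₀ : 0 ≤ Cf := (norm_nonneg _).trans (hCf 0)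
  refine eberleinTendsto_iff.2 fun t => NormedAddGroup.tendsto_nhds_zero.2 fun ε hε => ?_
  obtain ⟨h, hh, hgh, H, hH, hHδ⟩ := happrox (ε / (1 + Cf)) (by positivity)
  set δ := ε / (1 + Cf)
  obtain ⟨Ch, hCh⟩ := hh.2
  have hu := hg.sub hh
  obtain ⟨M, hM⟩ := hu.2
  have hHt : ‖H t‖ < δ :=
    (norm_le_supN (hH.norm_le (fun n => (hA.1 n).measure_ne_top) hCf
      fun x => (norm_tilde h x).trans_le (hCh _)) t).trans_lt hHδ
  filter_upwards [(eberleinTendsto_iff.1 hH t).norm.eventually_lt_const hHt,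
    hA.eventually_setAverage_norm_comp_sub_lt hu.1.continuous.measurable hM hgh t]
    with n hhn hun
  have hdiff : ‖⨍ x in A n, f x * conj (g (x - t) - h (x - t)) ∂μ‖ ≤ Cf * δ := by
    refine (norm_setAverage_mul_le hCf ?_).trans ?_
    · simpa only [Complex.norm_conj, Function.comp_def] using (hu.1.continuous.comp
        (continuous_sub_right t)).norm.locallyIntegrable.integrableOn_isCompact (hA.1 n)
    · simp only [Complex.norm_conj]
      gcongr
  rw [setAverage_mul_tilde_eq_add (hA.1 n) hf.1.continuous hg.1.continuous hh.1.continuous t]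
  calc _ ≤ _ := norm_add_le _ _
    _ < δ + Cf * δ := add_lt_add_of_lt_of_le hhn hdiff
    _ = ε := by simp only [δ]; field_simp
end
end
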